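/- Let K be ℝ or ℂ, d ≥ 1, and fix a norm ‖·‖ on K^d. Let 𝒜 be an irreducible compact set of d×d matrices over K, let ‖·‖_𝒜 be any Barabanov norm for 𝒜, and let ℬ be any nonempty bounded set of d×d matrices over K. Then |ρ(𝒜) − ρ(ℬ)| ≤ ecc(‖·‖_𝒜, ‖·‖)·H(𝒜,ℬ). -/

import Mathlib

open Filter Set

namespace JSRPaper

section Defs

variable {d : ℕ} {K : Type*} [RCLike K]

/-- `N` is a norm on `Fin d → K` (`K` is `ℝ` or `ℂ`). -/
def IsNorm (N : (Fin d → K) → ℝ) : Prop :=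
  (∀ x, 0 ≤ N x) ∧ (∀ x, N x = 0 ↔ x = 0) ∧
    (∀ (c : K) (x : Fin d → K), N (c • x) = ‖c‖ * N x) ∧
    (∀ x y, N (x + y) ≤ N x + N y)

/-- Operator norm of a matrix induced by the norm `N` on `Fin d → K`. -/
noncomputable def opNorm (N : (Fin d → K) → ℝ) (A : Matrix (Fin d) (Fin d) K) : ℝ :=
  sSup {r : ℝ | ∃ x : Fin d → K, N x = 1 ∧ r = N (A.mulVec x)}

/-- `‖𝒜‖ = sup_{A ∈ 𝒜} ‖A‖`. -/
noncomputable def setNorm (N : (Fin d → K) → ℝ) (𝒜 : Set (Matrix (Fin d) (Fin d) K)) : ℝ :=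
  sSup (opNorm N '' 𝒜)

/-- `𝒜^n`: the set of all products of `n` matrices from `𝒜`, with `𝒜^0 = {I}`. -/
def prodSet (𝒜 : Set (Matrix (Fin d) (Fin d) K)) : ℕ → Set (Matrix (Fin d) (Fin d) K)
  | 0 => {1}
  | n + 1 => {M | ∃ A ∈ 𝒜, ∃ P ∈ prodSet 𝒜 n, M = A * P}

/-- The joint spectral radius `ρ(𝒜) = limsup_{n → ∞} ‖𝒜^n‖^{1/n}`. -/
noncomputable def jsr (N : (Fin d → K) → ℝ) (𝒜 : Set (Matrix (Fin d) (Fin d) K)) : ℝ :=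
  Filter.limsup (fun n : ℕ => setNorm N (prodSet 𝒜 n) ^ ((n : ℝ)⁻¹)) Filter.atTop

/-- `𝒜` is irreducible: the matrices of `𝒜` have no common invariant subspace
other than `{0}` and `K^d`. -/
def IsIrred (𝒜 : Set (Matrix (Fin d) (Fin d) K)) : Prop :=
  ∀ W : Submodule K (Fin d → K), (∀ A ∈ 𝒜, ∀ x ∈ W, A.mulVec x ∈ W) → W = ⊥ ∨ W = ⊤

/-- `ℬ` is a bounded set of matrices (w.r.t. the operator norm induced by `N`). -/
def IsBdd (N : (Fin d → K) → ℝ) (ℬ : Set (Matrix (Fin d) (Fin d) K)) : Prop :=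
  ∃ C : ℝ, ∀ B ∈ ℬ, opNorm N B ≤ C

/-- The `p`-measure of irreducibility `χ_p(𝒜)`:
`inf_{‖x‖=1} sup { t : ball(0,t) ⊆ conv(𝒜_p(x) ∪ 𝒜_p(-x)) }`, where
`𝒜_p = ⋃_{k ≤ p} 𝒜^k`. -/
noncomputable def chi (N : (Fin d → K) → ℝ) (𝒜 : Set (Matrix (Fin d) (Fin d) K)) (p : ℕ) : ℝ :=
  sInf {s : ℝ | ∃ x : Fin d → K, N x = 1 ∧
    s = sSup {t : ℝ | {y : Fin d → K | N y ≤ t} ⊆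
      convexHull ℝ
        (((fun A : Matrix (Fin d) (Fin d) K => A.mulVec x) ''
            ⋃ k ∈ Finset.range (p + 1), prodSet 𝒜 k) ∪
          ((fun A : Matrix (Fin d) (Fin d) K => A.mulVec (-x)) ''
            ⋃ k ∈ Finset.range (p + 1), prodSet 𝒜 k))}}

/-- `ν_p(𝒜) = max{1, ‖𝒜‖^p} / χ_p(𝒜)`. -/
noncomputable def nu (N : (Fin d → K) → ℝ) (𝒜 : Set (Matrix (Fin d) (Fin d) K)) (p : ℕ) : ℝ :=
  max 1 (setNorm N 𝒜 ^ p) / chi N 𝒜 p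

/-- The Hausdorff distance between two matrix sets, w.r.t. the operator norm induced by `N`. -/
noncomputable def hdist (N : (Fin d → K) → ℝ) (𝒜 ℬ : Set (Matrix (Fin d) (Fin d) K)) : ℝ :=
  max (sSup ((fun A => sInf ((fun B => opNorm N (A - B)) '' ℬ)) '' 𝒜))
      (sSup ((fun B => sInf ((fun A => opNorm N (A - B)) '' 𝒜)) '' ℬ))

/-- `Nb` is a Barabanov norm for `𝒜`: it is a norm on `K^d` and
`ρ(𝒜)·‖x‖_b = max_{A ∈ 𝒜} ‖A x‖_b` for all `x` (`ρ(𝒜)` computed w.r.t. the reference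
norm `N`; its value does not depend on this choice). -/
def IsBarabanov (N Nb : (Fin d → K) → ℝ) (𝒜 : Set (Matrix (Fin d) (Fin d) K)) : Prop :=
  IsNorm Nb ∧ ∀ x : Fin d → K,
    jsr N 𝒜 * Nb x = sSup {r : ℝ | ∃ A ∈ 𝒜, r = Nb (A.mulVec x)}

/-- The eccentricity `ecc(N', N'') = (max_{x ≠ 0} N' x / N'' x) / (min_{x ≠ 0} N' x / N'' x)`. -/
noncomputable def eccen (N' N'' : (Fin d → K) → ℝ) : ℝ :=
  sSup {r : ℝ | ∃ x : Fin d → K, x ≠ 0 ∧ r = N' x / N'' x} /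
    sInf {r : ℝ | ∃ x : Fin d → K, x ≠ 0 ∧ r = N' x / N'' x}

end Defs

/-! In the Barabanov norm `‖·‖_b` of `𝒜` every `A ∈ 𝒜` stretches vectors by at most `ρ(𝒜)`,
and every `x` is stretched by almost exactly `ρ(𝒜)` by some `A ∈ 𝒜`. Comparing `‖·‖_b` with the
reference norm, a matrix `B` within `t` of `A` in the reference operator norm satisfies
`|‖Bx‖_b - ‖Ax‖_b| ≤ ecc · t · ‖x‖_b`. Hence every `B ∈ ℬ` stretches by at most `ρ(𝒜) + ecc · H`,
which bounds `ρ(ℬ)` from above; and every `x` is stretched by at least `ρ(𝒜) - ecc · H` by some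
`B ∈ ℬ`, which iterates along products and bounds `ρ(ℬ)` from below. -/

open scoped Matrix Topology

section Norms

variable {d : ℕ} {K : Type*} [RCLike K] {M N : (Fin d → K) → ℝ}

namespace IsNorm

lemma map_zero (hM : IsNorm M) : M 0 = 0 := (hM.2.1 0).2 rfl

lemma pos (hM : IsNorm M) {x : Fin d → K} (hx : x ≠ 0) : 0 < M x :=
  (hM.1 x).lt_of_ne' fun h => hx ((hM.2.1 x).1 h)

lemma map_neg (hM : IsNorm M) (x : Fin d → K) : M (-x) = M x := by
  simpa using hM.2.2.1 (-1) x

lemma map_smul_ofReal (hM : IsNorm M) (t : ℝ) (x : Fin d → K) :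
    M ((t : K) • x) = |t| * M x := by
  rw [hM.2.2.1, RCLike.norm_ofReal]

lemma exists_le_mul_norm (hM : IsNorm M) : ∃ C, 0 ≤ C ∧ ∀ x, M x ≤ C * ‖x‖ := by
  classical
  set e : Fin d → Fin d → K := fun i j => if i = j then 1 else 0
  refine ⟨∑ i, M (e i), Finset.sum_nonneg fun i _ => hM.1 _, fun x => ?_⟩
  calc M x = M (∑ i, x i • e i) := congrArg M (pi_eq_sum_univ x)
    _ ≤ ∑ i, M (x i • e i) := Finset.le_sum_of_subadditive M hM.map_zero.le hM.2.2.2 _ _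
    _ ≤ ∑ i, ‖x‖ * M (e i) := Finset.sum_le_sum fun i _ => by
        rw [hM.2.2.1]; exact mul_le_mul_of_nonneg_right (norm_le_pi_norm x i) (hM.1 _)
    _ = (∑ i, M (e i)) * ‖x‖ := by rw [← Finset.mul_sum, mul_comm]

lemma continuous (hM : IsNorm M) : Continuous M := by
  obtain ⟨C, hC, hMC⟩ := hM.exists_le_mul_norm
  refine (LipschitzWith.of_le_add_mul (Real.toNNReal C) fun x y => ?_).continuous
  calc M x = M (y + (x - y)) := by rw [add_sub_cancel]
    _ ≤ M y + C * ‖x - y‖ := (hM.2.2.2 _ _).trans (add_le_add_right (hMC _) _)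
    _ = M y + Real.toNNReal C * dist x y := by rw [Real.coe_toNNReal _ hC, dist_eq_norm]

lemma exists_mul_norm_le [NeZero d] (hM : IsNorm M) : ∃ c, 0 < c ∧ ∀ x, c * ‖x‖ ≤ M x := by
  obtain ⟨z, hz, hmin⟩ := (isCompact_sphere (0 : Fin d → K) 1).exists_isMinOn
    (NormedSpace.sphere_nonempty.2 zero_le_one) hM.continuous.continuousOn
  have hz0 : z ≠ 0 := ne_zero_of_mem_unit_sphere ⟨z, hz⟩
  refine ⟨M z, hM.pos hz0, fun x => ?_⟩
  rcases eq_or_ne x 0 with rfl | hx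
  · simp [hM.map_zero]
  have hx' : 0 < ‖x‖ := norm_pos_iff.2 hx
  have hu : ((‖x‖⁻¹ : ℝ) : K) • x ∈ Metric.sphere (0 : Fin d → K) 1 := by
    simp [norm_smul, hx'.ne']
  have := hmin hu
  rw [Set.mem_ofPred_eq, hM.map_smul_ofReal, abs_inv, abs_norm] at this
  rwa [← le_div_iff₀ hx', div_eq_inv_mul]

end IsNorm

lemma exists_le_mul_of_isNorm [NeZero d] (hN : IsNorm N) (hM : IsNorm M) :
    ∃ C, 0 < C ∧ ∀ x, N x ≤ C * M x := by
  obtain ⟨C, hC, hNC⟩ := hN.exists_le_mul_norm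
  obtain ⟨c, hc, hMc⟩ := hM.exists_mul_norm_le
  refine ⟨(C + 1) / c, by positivity, fun x => ?_⟩
  rw [div_mul_eq_mul_div, le_div_iff₀ hc]
  nlinarith [hNC x, hMc x, norm_nonneg x, hM.1 x]

end Norms

section Eccentricity

variable {d : ℕ} {K : Type*} [RCLike K] [NeZero d] {N' N'' : (Fin d → K) → ℝ}

lemma exists_eccen_eq (hN' : IsNorm N') (hN'' : IsNorm N'') :
    ∃ a b, 0 < a ∧ a ≤ b ∧ (∀ x, a * N'' x ≤ N' x) ∧ (∀ x, N' x ≤ b * N'' x) ∧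
      eccen N' N'' = b / a := by
  obtain ⟨C₁, hC₁0, hC₁⟩ := exists_le_mul_of_isNorm hN' hN''
  obtain ⟨C₂, hC₂, hC₂'⟩ := exists_le_mul_of_isNorm hN'' hN'
  set R := {r : ℝ | ∃ x : Fin d → K, x ≠ 0 ∧ r = N' x / N'' x}
  obtain ⟨x₀, hx₀⟩ := exists_ne (0 : Fin d → K)
  have hR : R.Nonempty := ⟨_, x₀, hx₀, rfl⟩
  have hRa : ∀ r ∈ R, r ≤ C₁ := by
    rintro _ ⟨x, hx, rfl⟩
    exact div_le_of_le_mul₀ (hN''.1 x) hC₁0.le (hC₁ x)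
  have hRb : ∀ r ∈ R, C₂⁻¹ ≤ r := by
    rintro _ ⟨x, hx, rfl⟩
    rw [le_div_iff₀ (hN''.pos hx), inv_mul_le_iff₀ hC₂]
    exact hC₂' x
  refine ⟨sInf R, sSup R, (inv_pos.2 hC₂).trans_le (le_csInf hR hRb),
    csInf_le_csSup hR ⟨_, hRb⟩ ⟨_, hRa⟩, fun x => ?_, fun x => ?_, rfl⟩
  all_goals rcases eq_or_ne x 0 with rfl | hx
  · simp [hN'.map_zero, hN''.map_zero]
  · exact (le_div_iff₀ (hN''.pos hx)).1 (csInf_le ⟨_, hRb⟩ ⟨x, hx, rfl⟩)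
  · simp [hN'.map_zero, hN''.map_zero]
  · exact (div_le_iff₀ (hN''.pos hx)).1 (le_csSup ⟨_, hRa⟩ ⟨x, hx, rfl⟩)

lemma eccen_pos (hN' : IsNorm N') (hN'' : IsNorm N'') : 0 < eccen N' N'' := by
  obtain ⟨a, b, ha, hab, -, -, he⟩ := exists_eccen_eq hN' hN''
  exact he ▸ div_pos (ha.trans_le hab) ha

lemma le_eccen_mul_of_le_mul (hN' : IsNorm N') (hN'' : IsNorm N'') {x y : Fin d → K} {t : ℝ}
    (ht : 0 ≤ t) (h : N'' y ≤ t * N'' x) : N' y ≤ eccen N' N'' * t * N' x := by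
  obtain ⟨a, b, ha, hab, hlow, hup, he⟩ := exists_eccen_eq hN' hN''
  rw [he, div_mul_eq_mul_div, div_mul_eq_mul_div, le_div_iff₀ ha]
  have hb : 0 ≤ b := ha.le.trans hab
  linarith [mul_le_mul_of_nonneg_right (hup y) ha.le,
    mul_le_mul_of_nonneg_left h (mul_nonneg hb ha.le),
    mul_le_mul_of_nonneg_left (hlow x) (mul_nonneg hb ht)]

lemma le_eccen_mul_of_le_mul' (hN' : IsNorm N') (hN'' : IsNorm N'') {x y : Fin d → K} {t : ℝ}
    (ht : 0 ≤ t) (h : N' y ≤ t * N' x) : N'' y ≤ eccen N' N'' * t * N'' x := by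
  obtain ⟨a, b, ha, hab, hlow, hup, he⟩ := exists_eccen_eq hN' hN''
  rw [he, div_mul_eq_mul_div, div_mul_eq_mul_div, le_div_iff₀ ha]
  linarith [hlow y, mul_le_mul_of_nonneg_left (hup x) ht]

end Eccentricity

section OperatorNorm

variable {d : ℕ} {K : Type*} [RCLike K] {M : (Fin d → K) → ℝ}
  {A B : Matrix (Fin d) (Fin d) K} {S : Set (Matrix (Fin d) (Fin d) K)}

attribute [local instance] Matrix.linftyOpNormedAddCommGroup

lemma opNorm_nonneg (hM : IsNorm M) (A : Matrix (Fin d) (Fin d) K) : 0 ≤ opNorm M A :=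
  Real.sSup_nonneg (by rintro _ ⟨x, -, rfl⟩; exact hM.1 _)

lemma opNorm_le_bound {t : ℝ} (ht : 0 ≤ t) (h : ∀ x, M (A *ᵥ x) ≤ t * M x) : opNorm M A ≤ t :=
  Real.sSup_le (by rintro _ ⟨x, hx, rfl⟩; simpa [hx] using h x) ht

lemma exists_mulVec_le_mul_norm [NeZero d] (hM : IsNorm M) :
    ∃ κ, 0 ≤ κ ∧ ∀ (A : Matrix (Fin d) (Fin d) K) x, M (A *ᵥ x) ≤ κ * ‖A‖ * M x := by
  obtain ⟨C, hC, hMC⟩ := hM.exists_le_mul_norm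
  obtain ⟨c, hc, hMc⟩ := hM.exists_mul_norm_le
  refine ⟨C / c, by positivity, fun A x => ?_⟩
  have hx : ‖x‖ ≤ M x / c := by rw [le_div_iff₀' hc]; exact hMc x
  calc M (A *ᵥ x) ≤ C * (‖A‖ * ‖x‖) :=
        (hMC _).trans (by gcongr; exact Matrix.linfty_opNorm_mulVec A x)
    _ ≤ C * (‖A‖ * (M x / c)) := by gcongr
    _ = C / c * ‖A‖ * M x := by ring

lemma le_opNorm [NeZero d] (hM : IsNorm M) (A : Matrix (Fin d) (Fin d) K) (x : Fin d → K) :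
    M (A *ᵥ x) ≤ opNorm M A * M x := by
  rcases eq_or_ne x 0 with rfl | hx
  · simp [hM.map_zero]
  have hMx := hM.pos hx
  obtain ⟨κ, -, hκ⟩ := exists_mulVec_le_mul_norm hM
  have hbdd : BddAbove {r | ∃ x : Fin d → K, M x = 1 ∧ r = M (A *ᵥ x)} :=
    ⟨κ * ‖A‖, by rintro _ ⟨y, hy, rfl⟩; simpa [hy] using hκ A y⟩
  set c : K := (((M x)⁻¹ : ℝ) : K)
  have hu : M (c • x) = 1 := by
    rw [hM.map_smul_ofReal, abs_inv, abs_of_pos hMx, inv_mul_cancel₀ hMx.ne']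
  have hAu : M (A *ᵥ (c • x)) = (M x)⁻¹ * M (A *ᵥ x) := by
    rw [Matrix.mulVec_smul, hM.map_smul_ofReal, abs_inv, abs_of_pos hMx]
  rw [← div_le_iff₀ hMx, div_eq_inv_mul, ← hAu]
  exact le_csSup hbdd ⟨c • x, hu, rfl⟩

lemma opNorm_sub_le [NeZero d] (hM : IsNorm M) (A B : Matrix (Fin d) (Fin d) K) :
    opNorm M (A - B) ≤ opNorm M A + opNorm M B := by
  refine opNorm_le_bound (add_nonneg (opNorm_nonneg hM A) (opNorm_nonneg hM B)) fun x => ?_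
  rw [Matrix.sub_mulVec, sub_eq_add_neg, add_mul]
  exact (hM.2.2.2 _ _).trans
    (add_le_add (le_opNorm hM A x) ((hM.map_neg _).trans_le (le_opNorm hM B x)))

lemma opNorm_sub_comm (hM : IsNorm M) (A B : Matrix (Fin d) (Fin d) K) :
    opNorm M (A - B) = opNorm M (B - A) := by
  rw [← neg_sub B A]
  simp only [opNorm, Matrix.neg_mulVec, hM.map_neg]

lemma isBdd_of_isCompact [NeZero d] (hM : IsNorm M) (hS : IsCompact S) : IsBdd M S := by
  obtain ⟨κ, hκ, hMκ⟩ := exists_mulVec_le_mul_norm hM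
  obtain ⟨R, hR⟩ := hS.isBounded.exists_norm_le
  exact ⟨κ * R, fun A hA =>
    (opNorm_le_bound (by positivity) (hMκ A)).trans (by gcongr; exact hR A hA)⟩

lemma IsBdd.exists_mulVec_le [NeZero d] (hM : IsNorm M) (hS : IsBdd M S) :
    ∃ C, 0 ≤ C ∧ ∀ B ∈ S, ∀ x, M (B *ᵥ x) ≤ C * M x := by
  obtain ⟨C, hC⟩ := hS
  exact ⟨max C 0, le_max_right _ _, fun B hB x => (le_opNorm hM B x).trans
    (mul_le_mul_of_nonneg_right ((hC B hB).trans (le_max_left _ _)) (hM.1 x))⟩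

lemma setNorm_nonneg (hM : IsNorm M) (S : Set (Matrix (Fin d) (Fin d) K)) : 0 ≤ setNorm M S :=
  Real.sSup_nonneg (by rintro _ ⟨A, -, rfl⟩; exact opNorm_nonneg hM A)

lemma setNorm_le_of_mulVec_le {t : ℝ} (ht : 0 ≤ t) (h : ∀ A ∈ S, ∀ x, M (A *ᵥ x) ≤ t * M x) :
    setNorm M S ≤ t :=
  Real.sSup_le (by rintro _ ⟨A, hA, rfl⟩; exact opNorm_le_bound ht (h A hA)) ht

lemma IsBdd.opNorm_le_setNorm (hS : IsBdd M S) (hA : A ∈ S) : opNorm M A ≤ setNorm M S :=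
  le_csSup (hS.imp fun _ hC => by rintro _ ⟨B, hB, rfl⟩; exact hC B hB) (mem_image_of_mem _ hA)

end OperatorNorm

section Products

variable {d : ℕ} {K : Type*} [RCLike K] {M : (Fin d → K) → ℝ}
  {S : Set (Matrix (Fin d) (Fin d) K)} {r : ℝ}

lemma mulVec_le_pow_of_mem_prodSet (hr : 0 ≤ r) (h : ∀ B ∈ S, ∀ x, M (B *ᵥ x) ≤ r * M x) :
    ∀ n, ∀ P ∈ prodSet S n, ∀ x, M (P *ᵥ x) ≤ r ^ n * M x
  | 0, _, rfl, x => by simp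
  | n + 1, _, ⟨B, hB, P, hP, rfl⟩, x => by
    rw [← Matrix.mulVec_mulVec, pow_succ', mul_assoc]
    exact (h B hB _).trans
      (mul_le_mul_of_nonneg_left (mulVec_le_pow_of_mem_prodSet hr h n P hP x) hr)

lemma exists_mem_prodSet_lt_mulVec (hr : 0 ≤ r)
    (h : ∀ x, ∀ s < r * M x, ∃ B ∈ S, s < M (B *ᵥ x)) :
    ∀ n x, ∀ s < r ^ n * M x, ∃ P ∈ prodSet S n, s < M (P *ᵥ x)
  | 0, x, s, hs => ⟨1, rfl, by simpa using hs⟩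
  | n + 1, x, s, hs => by
    -- pick `s'` so that beating `s'` with a product of length `n` lets one more factor beat `s`
    obtain ⟨s', hs', hss'⟩ : ∃ s' < r ^ n * M x, ∀ y, s' < y → s < r * y := by
      rcases hr.eq_or_lt with hr0 | hr
      · exact ⟨r ^ n * M x - 1, by linarith, fun y _ => by simpa [← hr0] using hs⟩
      · refine ⟨s / r, ?_, fun y hy => (div_lt_iff₀' hr).1 hy⟩
        rwa [div_lt_iff₀' hr, ← mul_assoc, ← pow_succ']
    obtain ⟨P, hP, hsP⟩ := exists_mem_prodSet_lt_mulVec hr h n x s' hs'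
    obtain ⟨B, hB, hsB⟩ := h (P *ᵥ x) s (hss' _ hsP)
    exact ⟨B * P, ⟨B, hB, P, hP, rfl⟩, by rwa [← Matrix.mulVec_mulVec]⟩

lemma forall_exists_lt_mulVec_max_zero (hM : ∀ y, 0 ≤ M y) (hS : S.Nonempty)
    (h : ∀ x, ∀ s < r * M x, ∃ B ∈ S, s < M (B *ᵥ x)) :
    ∀ x, ∀ s < max r 0 * M x, ∃ B ∈ S, s < M (B *ᵥ x) := by
  intro x s hs
  rw [max_mul_of_nonneg _ _ (hM x), zero_mul, lt_max_iff] at hs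
  obtain ⟨B, hB⟩ := hS
  exact hs.elim (h x s) fun hs => ⟨B, hB, hs.trans_le (hM _)⟩

end Products

section RootAsymptotics

variable {u : ℕ → ℝ} {c r C : ℝ}

lemma tendsto_mul_pow_rpow_inv (hc : 0 < c) (hr : 0 ≤ r) :
    Tendsto (fun n : ℕ => (c * r ^ n) ^ (n : ℝ)⁻¹) atTop (𝓝 r) := by
  have hc' : Tendsto (fun n : ℕ => c ^ (n : ℝ)⁻¹) atTop (𝓝 1) := by
    simpa [Function.comp_def] using (Real.continuousAt_const_rpow hc.ne').tendsto.comp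
      (tendsto_inv_atTop_zero.comp tendsto_natCast_atTop_atTop)
  refine (one_mul r ▸ hc'.mul_const r).congr' ?_
  filter_upwards [eventually_ne_atTop 0] with n hn
  rw [Real.mul_rpow hc.le (pow_nonneg hr n), Real.pow_rpow_inv_natCast hr hn]

lemma limsup_rpow_inv_le (hc : 0 < c) (hr : 0 ≤ r) (hu₀ : ∀ n, 0 ≤ u n)
    (hu : ∀ n, u n ≤ c * r ^ n) : limsup (fun n : ℕ => u n ^ (n : ℝ)⁻¹) atTop ≤ r := by
  have hlim := tendsto_mul_pow_rpow_inv hc hr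
  calc limsup (fun n : ℕ => u n ^ (n : ℝ)⁻¹) atTop
      ≤ limsup (fun n : ℕ => (c * r ^ n) ^ (n : ℝ)⁻¹) atTop :=
        limsup_le_limsup (Eventually.of_forall fun n =>
          Real.rpow_le_rpow (hu₀ n) (hu n) (by positivity))
          (isBoundedUnder_of ⟨0, fun n => Real.rpow_nonneg (hu₀ n) _⟩).isCoboundedUnder_le
          hlim.isBoundedUnder_le
    _ = r := hlim.limsup_eq

lemma le_limsup_rpow_inv (hc : 0 < c) (hr : 0 ≤ r) (hC : 0 ≤ C) (hlow : ∀ n, c * r ^ n ≤ u n)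
    (hup : ∀ n, u n ≤ C ^ n) : r ≤ limsup (fun n : ℕ => u n ^ (n : ℝ)⁻¹) atTop := by
  have hlim := tendsto_mul_pow_rpow_inv hc hr
  have hu₀ n : 0 ≤ u n := (by positivity : 0 ≤ c * r ^ n).trans (hlow n)
  have hbdd : IsBoundedUnder (· ≤ ·) atTop fun n : ℕ => u n ^ (n : ℝ)⁻¹ :=
    isBoundedUnder_of_eventually_le (a := C) <| (eventually_ne_atTop 0).mono fun n hn =>
      (Real.rpow_le_rpow (hu₀ n) (hup n) (by positivity)).trans_eq
        (Real.pow_rpow_inv_natCast hC hn)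
  calc r = limsup (fun n : ℕ => (c * r ^ n) ^ (n : ℝ)⁻¹) atTop := hlim.limsup_eq.symm
    _ ≤ _ := limsup_le_limsup (Eventually.of_forall fun n =>
        Real.rpow_le_rpow (by positivity) (hlow n) (by positivity))
        hlim.isCoboundedUnder_le hbdd

end RootAsymptotics

section JointSpectralRadius

variable {d : ℕ} {K : Type*} [RCLike K] [NeZero d] {M N : (Fin d → K) → ℝ}
  {S : Set (Matrix (Fin d) (Fin d) K)} {r : ℝ}

lemma jsr_le_of_mulVec_le (hN : IsNorm N) (hM : IsNorm M) (hS : S.Nonempty)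
    (h : ∀ B ∈ S, ∀ x, M (B *ᵥ x) ≤ r * M x) : jsr N S ≤ r := by
  have hr : 0 ≤ r := by
    obtain ⟨B, hB⟩ := hS
    obtain ⟨x, hx⟩ := exists_ne (0 : Fin d → K)
    exact nonneg_of_mul_nonneg_left ((hM.1 _).trans (h B hB x)) (hM.pos hx)
  have hε := eccen_pos hM hN
  refine limsup_rpow_inv_le hε hr (fun n => setNorm_nonneg hN _) fun n =>
    setNorm_le_of_mulVec_le (by positivity) fun P hP x => ?_
  exact le_eccen_mul_of_le_mul' hM hN (by positivity)
    (mulVec_le_pow_of_mem_prodSet hr h n P hP x)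

lemma le_jsr_of_forall_exists_lt (hN : IsNorm N) (hM : IsNorm M) (hS : IsBdd N S) (hr : 0 ≤ r)
    (h : ∀ x, ∀ s < r * M x, ∃ B ∈ S, s < M (B *ᵥ x)) : r ≤ jsr N S := by
  obtain ⟨C, hC, hSC⟩ := hS.exists_mulVec_le hN
  have hSn := mulVec_le_pow_of_mem_prodSet hC hSC
  have hε := eccen_pos hM hN
  obtain ⟨x₀, hx₀⟩ := exists_ne (0 : Fin d → K)
  refine le_limsup_rpow_inv (inv_pos.2 hε) hr hC (fun n => ?_) fun n =>
    setNorm_le_of_mulVec_le (by positivity) (hSn n)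
  have hbdd : IsBdd N (prodSet S n) :=
    ⟨C ^ n, fun P hP => opNorm_le_bound (by positivity) (hSn n P hP)⟩
  rw [inv_mul_le_iff₀ hε, ← mul_le_mul_iff_left₀ (hM.pos hx₀)]
  refine le_of_forall_lt fun s hs => ?_
  obtain ⟨P, hP, hsP⟩ := exists_mem_prodSet_lt_mulVec hr h n x₀ s hs
  calc s < M (P *ᵥ x₀) := hsP
    _ ≤ eccen M N * opNorm N P * M x₀ :=
        le_eccen_mul_of_le_mul hM hN (opNorm_nonneg hN P) (le_opNorm hN P x₀)
    _ ≤ eccen M N * setNorm N (prodSet S n) * M x₀ := mul_le_mul_of_nonneg_right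
        (mul_le_mul_of_nonneg_left (hbdd.opNorm_le_setNorm hP) hε.le) (hM.1 x₀)

end JointSpectralRadius

section Hausdorff

variable {d : ℕ} {K : Type*} [RCLike K] {M : (Fin d → K) → ℝ}
  {S T : Set (Matrix (Fin d) (Fin d) K)} {A : Matrix (Fin d) (Fin d) K} {t : ℝ}

lemma hdist_comm (hM : IsNorm M) (S T : Set (Matrix (Fin d) (Fin d) K)) :
    hdist M S T = hdist M T S := by
  rw [hdist, hdist, max_comm]
  simp only [opNorm_sub_comm hM]

lemma exists_opNorm_sub_lt_of_hdist_lt [NeZero d] (hM : IsNorm M) (hS : IsBdd M S)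
    (hT : IsBdd M T) (hT' : T.Nonempty) (hA : A ∈ S) (ht : hdist M S T < t) :
    ∃ B ∈ T, opNorm M (A - B) < t := by
  obtain ⟨CS, hCS⟩ := hS
  obtain ⟨CT, hCT⟩ := hT
  obtain ⟨B₀, hB₀⟩ := hT'
  have hbdd : BddAbove ((fun A => sInf ((fun B => opNorm M (A - B)) '' T)) '' S) := by
    refine ⟨CS + CT, ?_⟩
    rintro _ ⟨A', hA', rfl⟩
    have hbelow : BddBelow ((fun B => opNorm M (A' - B)) '' T) :=
      ⟨0, by rintro _ ⟨B, -, rfl⟩; exact opNorm_nonneg hM _⟩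
    exact (csInf_le hbelow (mem_image_of_mem _ hB₀)).trans
      ((opNorm_sub_le hM _ _).trans (add_le_add (hCS A' hA') (hCT B₀ hB₀)))
  have hinf : sInf ((fun B => opNorm M (A - B)) '' T) < t :=
    ((le_csSup hbdd (mem_image_of_mem _ hA)).trans (le_max_left _ _)).trans_lt ht
  obtain ⟨_, ⟨B, hB, rfl⟩, hlt⟩ := exists_lt_of_csInf_lt ⟨_, mem_image_of_mem _ hB₀⟩ hinf
  exact ⟨B, hB, hlt⟩

end Hausdorff

section Barabanov

variable {d : ℕ} {K : Type*} [RCLike K] {M N : (Fin d → K) → ℝ}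
  {𝒜 : Set (Matrix (Fin d) (Fin d) K)} {A : Matrix (Fin d) (Fin d) K}

lemma IsBarabanov.mulVec_le [NeZero d] (hMb : IsBarabanov N M 𝒜) (h𝒜 : IsBdd M 𝒜)
    (hA : A ∈ 𝒜) (x : Fin d → K) : M (A *ᵥ x) ≤ jsr N 𝒜 * M x := by
  obtain ⟨C, -, hC⟩ := h𝒜.exists_mulVec_le hMb.1
  rw [hMb.2 x]
  exact le_csSup ⟨C * M x, by rintro _ ⟨A', hA', rfl⟩; exact hC A' hA' x⟩ ⟨A, hA, rfl⟩

lemma IsBarabanov.exists_lt_mulVec (hMb : IsBarabanov N M 𝒜) (h𝒜 : 𝒜.Nonempty) (x : Fin d → K)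
    {s : ℝ} (hs : s < jsr N 𝒜 * M x) : ∃ A ∈ 𝒜, s < M (A *ᵥ x) := by
  obtain ⟨A₀, hA₀⟩ := h𝒜
  rw [hMb.2 x] at hs
  obtain ⟨_, ⟨A, hA, rfl⟩, hlt⟩ := exists_lt_of_lt_csSup
    (⟨_, A₀, hA₀, rfl⟩ : {r | ∃ A ∈ 𝒜, r = M (A *ᵥ x)}.Nonempty) hs
  exact ⟨A, hA, hlt⟩

end Barabanov

section Perturbation

variable {d : ℕ} {K : Type*} [RCLike K] [NeZero d] {M N : (Fin d → K) → ℝ}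
  {𝒜 ℬ : Set (Matrix (Fin d) (Fin d) K)} {A B : Matrix (Fin d) (Fin d) K} {ρ h t : ℝ}

lemma mulVec_le_add_of_opNorm_sub_le (hN : IsNorm N) (hM : IsNorm M)
    (hAB : opNorm N (A - B) ≤ t) (x : Fin d → K) :
    M (A *ᵥ x) ≤ M (B *ᵥ x) + eccen M N * t * M x := by
  calc M (A *ᵥ x) = M (B *ᵥ x + (A - B) *ᵥ x) := by rw [Matrix.sub_mulVec, add_sub_cancel]
    _ ≤ M (B *ᵥ x) + eccen M N * opNorm N (A - B) * M x := (hM.2.2.2 _ _).trans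
        (add_le_add_right
          (le_eccen_mul_of_le_mul hM hN (opNorm_nonneg hN _) (le_opNorm hN _ x)) _)
    _ ≤ M (B *ᵥ x) + eccen M N * t * M x := add_le_add_right (mul_le_mul_of_nonneg_right
        (mul_le_mul_of_nonneg_left hAB (eccen_pos hM hN).le) (hM.1 x)) _

lemma mulVec_le_of_forall_near (hN : IsNorm N) (hM : IsNorm M)
    (hA : ∀ A ∈ 𝒜, ∀ x, M (A *ᵥ x) ≤ ρ * M x)
    (hnear : ∀ t > h, ∃ A ∈ 𝒜, opNorm N (B - A) < t) (x : Fin d → K) :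
    M (B *ᵥ x) ≤ (ρ + eccen M N * h) * M x := by
  have key : ∀ t > h, M (B *ᵥ x) ≤ (ρ + eccen M N * t) * M x := fun t ht => by
    obtain ⟨A, hA𝒜, hBA⟩ := hnear t ht
    calc M (B *ᵥ x) ≤ M (A *ᵥ x) + eccen M N * t * M x :=
          mulVec_le_add_of_opNorm_sub_le hN hM hBA.le x
      _ ≤ ρ * M x + eccen M N * t * M x := add_le_add_left (hA A hA𝒜 x) _
      _ = (ρ + eccen M N * t) * M x := by ring
  have hcont : ContinuousWithinAt (fun t => (ρ + eccen M N * t) * M x) (Ioi h) h := by fun_prop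
  exact ge_of_tendsto hcont (eventually_nhdsWithin_of_forall key)

lemma exists_lt_mulVec_of_forall_near (hN : IsNorm N) (hM : IsNorm M)
    (hA : ∀ x, ∀ s < ρ * M x, ∃ A ∈ 𝒜, s < M (A *ᵥ x))
    (hnear : ∀ A ∈ 𝒜, ∀ t > h, ∃ B ∈ ℬ, opNorm N (A - B) < t) (x : Fin d → K) {s : ℝ}
    (hs : s < (ρ - eccen M N * h) * M x) : ∃ B ∈ ℬ, s < M (B *ᵥ x) := by
  obtain ⟨t, ht, hst⟩ : ∃ t > h, s < (ρ - eccen M N * t) * M x := by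
    have hcont : ContinuousWithinAt (fun t => (ρ - eccen M N * t) * M x) (Ioi h) h := by
      fun_prop
    exact ((hcont.eventually (lt_mem_nhds hs)).and self_mem_nhdsWithin).exists.imp
      fun t ht => ⟨ht.2, ht.1⟩
  obtain ⟨A, hA𝒜, hsA⟩ := hA x (s + eccen M N * t * M x) (by linarith)
  obtain ⟨B, hB, hAB⟩ := hnear A hA𝒜 t ht
  exact ⟨B, hB, by linarith [mulVec_le_add_of_opNorm_sub_le hN hM hAB.le x]⟩

end Perturbation

theorem lipschitz_jsr_ecc_general {d : ℕ} (hd : 1 ≤ d) {K : Type*} [RCLike K]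
    (N : (Fin d → K) → ℝ) (hN : IsNorm N)
    (𝒜 : Set (Matrix (Fin d) (Fin d) K))
    (h𝒜ne : 𝒜.Nonempty) (h𝒜cp : IsCompact 𝒜)
    (Nb : (Fin d → K) → ℝ) (hNb : IsBarabanov N Nb 𝒜)
    (ℬ : Set (Matrix (Fin d) (Fin d) K)) (hℬne : ℬ.Nonempty) (hℬbd : IsBdd N ℬ) :
    |jsr N 𝒜 - jsr N ℬ| ≤ eccen Nb N * hdist N 𝒜 ℬ := by
  have : NeZero d := ⟨by omega⟩
  have h𝒜bd : IsBdd N 𝒜 := isBdd_of_isCompact hN h𝒜cp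
  have h𝒜bd' : IsBdd Nb 𝒜 := isBdd_of_isCompact hNb.1 h𝒜cp
  have hupper : jsr N ℬ ≤ jsr N 𝒜 + eccen Nb N * hdist N 𝒜 ℬ :=
    jsr_le_of_mulVec_le hN hNb.1 hℬne fun B hB =>
      mulVec_le_of_forall_near hN hNb.1 (fun A hA => hNb.mulVec_le h𝒜bd' hA) fun t ht =>
        exists_opNorm_sub_lt_of_hdist_lt hN hℬbd h𝒜bd h𝒜ne hB (hdist_comm hN ℬ 𝒜 ▸ ht)
  have hlower : jsr N 𝒜 - eccen Nb N * hdist N 𝒜 ℬ ≤ jsr N ℬ :=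
    (le_max_left _ 0).trans <| le_jsr_of_forall_exists_lt hN hNb.1 hℬbd (le_max_right _ _) <|
      forall_exists_lt_mulVec_max_zero hNb.1.1 hℬne fun x _ hs =>
        exists_lt_mulVec_of_forall_near hN hNb.1 (hNb.exists_lt_mulVec h𝒜ne)
          (fun A hA t ht => exists_opNorm_sub_lt_of_hdist_lt hN h𝒜bd hℬbd hℬne hA ht) x hs
  rw [abs_sub_le_iff]
  constructor <;> linarith

/-- the eccentricity of a Barabanov norm of `𝒜` w.r.t. the fixed norm serves
as a Lipschitz constant: `|ρ(𝒜) − ρ(ℬ)| ≤ ecc(‖·‖_𝒜, ‖·‖) · H(𝒜, ℬ)`. -/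
theorem lipschitz_jsr_ecc {d : ℕ} (hd : 1 ≤ d) {K : Type*} [RCLike K]
    (N : (Fin d → K) → ℝ) (hN : IsNorm N)
    (𝒜 : Set (Matrix (Fin d) (Fin d) K))
    (h𝒜ne : 𝒜.Nonempty) (h𝒜cp : IsCompact 𝒜) (h𝒜ir : IsIrred 𝒜)
    (Nb : (Fin d → K) → ℝ) (hNb : IsBarabanov N Nb 𝒜)
    (ℬ : Set (Matrix (Fin d) (Fin d) K)) (hℬne : ℬ.Nonempty) (hℬbd : IsBdd N ℬ) :
    |jsr N 𝒜 - jsr N ℬ| ≤ eccen Nb N * hdist N 𝒜 ℬ :=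
  lipschitz_jsr_ecc_general hd N hN 𝒜 h𝒜ne h𝒜cp Nb hNb ℬ hℬne hℬbd

end JSRPaper
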